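/- arXiv:2110.12263 — 6 statements merged into one kernel-verified Lean document; each statement's English description precedes it below -/
import Mathlib

section
/- Let i ≥ 1 be an integer, let t > 0, let w : ℝ → ℝ be i times continuously differentiable on [0,t], and let K : ℝ × ℝ → ℝ be such that τ ↦ K(t,τ) is i times continuously differentiable on [0,t] and additionally satisfies K^(j)(t,0) = 0 for every j ∈ {0,1,…,i−1} (the bivariate feedthrough non-asymptotic kernel condition at τ = 0). Then ∫₀ᵗ K(t,τ)·w^(i)(τ) dτ = Σ_{j=0}^{i−1} (−1)^{i−j−1} w^(j)(t) K^(i−j−1)(t,t) + (−1)^i ∫₀ᵗ K^(i)(t,τ)·w(τ) dτ; i.e., the Volterra image of w^(i) depends only on current values of w and its derivatives and on the Volterra image of w, with no dependence on the initial conditions w^(j)(0). -/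
/-!
Integrate by parts `i` times, moving every derivative from `w` onto `K t`. The boundary terms
at `τ = 0` are the products `K^(p)(t,0) w^(i-p-1)(0)`, which the BF-NK condition kills; those at
`τ = t` give the sum, reindexed by `j = i - p - 1`.
-/

open Set

section IntegrationByParts

variable {a b : ℝ} {u v : ℝ → ℝ}

theorem integral_iteratedDerivWithin_mul_iteratedDerivWithin_succ (hab : a < b) {k l : ℕ}
    (hu : ContDiffOn ℝ (k + 1) u (Icc a b)) (hv : ContDiffOn ℝ (l + 1) v (Icc a b)) :
    ∫ x in a..b, iteratedDerivWithin k u (Icc a b) x * iteratedDerivWithin (l + 1) v (Icc a b) x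
      = iteratedDerivWithin k u (Icc a b) b * iteratedDerivWithin l v (Icc a b) b
        - iteratedDerivWithin k u (Icc a b) a * iteratedDerivWithin l v (Icc a b) a
        - ∫ x in a..b,
            iteratedDerivWithin (k + 1) u (Icc a b) x * iteratedDerivWithin l v (Icc a b) x := by
  have hS : UniqueDiffOn ℝ (Icc a b) := uniqueDiffOn_Icc hab
  have huIcc : uIcc a b = Icc a b := uIcc_of_le hab.le
  have hderiv {f : ℝ → ℝ} {n : ℕ} (hf : ContDiffOn ℝ (n + 1) f (Icc a b)) :
      ∀ x ∈ uIcc a b, HasDerivWithinAt (iteratedDerivWithin n f (Icc a b))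
        (iteratedDerivWithin (n + 1) f (Icc a b) x) (uIcc a b) x := by
    intro x hx
    rw [huIcc] at hx ⊢
    rw [iteratedDerivWithin_succ]
    exact (hf.differentiableOn_iteratedDerivWithin (by norm_cast; omega) hS x hx).hasDerivWithinAt
  have hint {f : ℝ → ℝ} {n : ℕ} (hf : ContDiffOn ℝ (n + 1) f (Icc a b)) :
      IntervalIntegrable (iteratedDerivWithin (n + 1) f (Icc a b)) MeasureTheory.volume a b :=
    ContinuousOn.intervalIntegrable (huIcc ▸ hf.continuousOn_iteratedDerivWithin le_rfl hS)
  exact intervalIntegral.integral_mul_deriv_eq_deriv_mul_of_hasDerivWithinAt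
    (hderiv hu) (hderiv hv) (hint hu) (hint hv)

theorem integral_mul_iteratedDerivWithin_eq_sum_add (hab : a < b) {m n : ℕ} (hmn : m ≤ n)
    (hu : ContDiffOn ℝ m u (Icc a b)) (hv : ContDiffOn ℝ n v (Icc a b)) :
    ∫ x in a..b, u x * iteratedDerivWithin n v (Icc a b) x
      = (∑ p ∈ Finset.range m, (-1 : ℝ) ^ p *
            (iteratedDerivWithin p u (Icc a b) b * iteratedDerivWithin (n - p - 1) v (Icc a b) b
              - iteratedDerivWithin p u (Icc a b) a * iteratedDerivWithin (n - p - 1) v (Icc a b) a))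
        + (-1 : ℝ) ^ m * ∫ x in a..b,
            iteratedDerivWithin m u (Icc a b) x * iteratedDerivWithin (n - m) v (Icc a b) x := by
  induction m with
  | zero => simp
  | succ m ih =>
    have hvn : ContDiffOn ℝ (n - m - 1 + 1 : ℕ) v (Icc a b) := hv.of_le (by norm_cast; omega)
    rw [ih (by omega) (hu.of_le (by norm_cast; omega)), show n - m = n - m - 1 + 1 by omega,
      integral_iteratedDerivWithin_mul_iteratedDerivWithin_succ hab hu hvn,
      Finset.sum_range_succ, show n - (m + 1) = n - m - 1 by omega]
    ring

end IntegrationByParts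

theorem volterra_image_of_iterated_deriv_BFNK_general
    (i : ℕ) (t : ℝ) (ht : 0 < t)
    (w : ℝ → ℝ) (K : ℝ → ℝ → ℝ)
    (hw : ContDiffOn ℝ i w (Set.Icc 0 t))
    (hK : ContDiffOn ℝ i (K t) (Set.Icc 0 t))
    (hBFNK : ∀ j < i, iteratedDerivWithin j (K t) (Set.Icc 0 t) 0 = 0) :
    ∫ τ in (0:ℝ)..t, K t τ * iteratedDerivWithin i w (Set.Icc 0 t) τ
      = (∑ j ∈ Finset.range i,
            (-1 : ℝ) ^ (i - j - 1) * iteratedDerivWithin j w (Set.Icc 0 t) t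
              * iteratedDerivWithin (i - j - 1) (K t) (Set.Icc 0 t) t)
        + (-1 : ℝ) ^ i
            * ∫ τ in (0:ℝ)..t, iteratedDerivWithin i (K t) (Set.Icc 0 t) τ * w τ := by
  rw [integral_mul_iteratedDerivWithin_eq_sum_add ht le_rfl hK hw, Nat.sub_self,
    iteratedDerivWithin_zero, ← Finset.sum_range_reflect]
  congr 1
  refine Finset.sum_congr rfl fun j hj => ?_
  have hj : j < i := Finset.mem_range.mp hj
  rw [hBFNK _ (by omega), show i - 1 - j = i - j - 1 by omega,
    show i - (i - j - 1) - 1 = j by omega]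
  ring

/-- For a kernel satisfying the BF-NK condition `K^(j)(t,0) = 0` for all
`j < i`, the Volterra image of `w^(i)` depends only on the current values of
`w` and its derivatives and on the Volterra image of `w` itself: the
initial-condition terms vanish. -/
theorem volterra_image_of_iterated_deriv_BFNK
    (i : ℕ) (hi : 1 ≤ i) (t : ℝ) (ht : 0 < t)
    (w : ℝ → ℝ) (K : ℝ → ℝ → ℝ)
    (hw : ContDiffOn ℝ i w (Set.Icc 0 t))
    (hK : ContDiffOn ℝ i (K t) (Set.Icc 0 t))
    (hBFNK : ∀ j < i, iteratedDerivWithin j (K t) (Set.Icc 0 t) 0 = 0) :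
    ∫ τ in (0:ℝ)..t, K t τ * iteratedDerivWithin i w (Set.Icc 0 t) τ
      = (∑ j ∈ Finset.range i,
            (-1 : ℝ) ^ (i - j - 1) * iteratedDerivWithin j w (Set.Icc 0 t) t
              * iteratedDerivWithin (i - j - 1) (K t) (Set.Icc 0 t) t)
        + (-1 : ℝ) ^ i
            * ∫ τ in (0:ℝ)..t, iteratedDerivWithin i (K t) (Set.Icc 0 t) τ * w τ :=
  volterra_image_of_iterated_deriv_BFNK_general i t ht w K hw hK hBFNK
end

section
/- Let ω > 0, ω̄ > 0 and δ ∈ ℕ with δ ≥ 1, and define the kernel K : ℝ × ℝ → ℝ by K(t,τ) = exp(−ω(t−τ))·(1 − exp(−ω̄ τ))^δ. Then: (i) for every t ∈ ℝ and every j ∈ {0,1,…,δ−1}, the j-th derivative of the function τ ↦ K(t,τ) evaluated at τ = 0 equals 0; and (ii) for every t > 0, K(t,t) = (1 − exp(−ω̄ t))^δ > 0. In particular K is a δ-th order bivariate feedthrough non-asymptotic kernel. -/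
/-! Every derivative of `g · uⁿ` is again of the form `h · uᵐ` with `h` smooth, each
differentiation lowering the exponent by one; so at a zero of `u` the derivatives of order
below `n` vanish. Here `u(τ) = 1 − exp(−ω̄τ)` vanishes at `0`, and on the diagonal
`0 < u(t) < 1` for `t > 0`. -/

section VanishingOrder

open scoped ContDiff

variable {𝕜 : Type*} [NontriviallyNormedField 𝕜] {g u : 𝕜 → 𝕜}

theorem deriv_mul_pow_succ (hg : Differentiable 𝕜 g) (hu : Differentiable 𝕜 u) (m : ℕ) :
    deriv (fun x => g x * u x ^ (m + 1)) =
      fun x => (deriv g x * u x + (m + 1) * g x * deriv u x) * u x ^ m := by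
  funext x
  refine (((hg x).hasDerivAt.mul ((hu x).hasDerivAt.pow (m + 1))).deriv).trans ?_
  simp only [Pi.pow_apply, Nat.add_sub_cancel]
  push_cast
  ring

theorem iteratedDeriv_mul_pow_eq_zero (hg : ContDiff 𝕜 ∞ g) (hu : ContDiff 𝕜 ∞ u)
    {a : 𝕜} (ha : u a = 0) {j n : ℕ} (hjn : j < n) :
    iteratedDeriv j (fun x => g x * u x ^ n) a = 0 := by
  induction j generalizing g n with
  | zero => simp [ha, zero_pow (Nat.pos_iff_ne_zero.mp hjn)]
  | succ j ih =>
    obtain ⟨m, rfl⟩ : ∃ m, n = m + 1 := ⟨n - 1, by omega⟩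
    have hg' := contDiff_infty_iff_deriv.mp hg
    have hu' := contDiff_infty_iff_deriv.mp hu
    rw [iteratedDeriv_succ', deriv_mul_pow_succ hg'.1 hu'.1]
    exact ih (by fun_prop) (by omega)

end VanishingOrder

theorem BFNK_kernel_properties_general
    (ω ω' : ℝ) (hω' : 0 < ω') (δ : ℕ)
    (K : ℝ → ℝ → ℝ)
    (hK : K = fun t τ => Real.exp (-ω * (t - τ)) * (1 - Real.exp (-ω' * τ)) ^ δ) :
    (∀ t : ℝ, ∀ j < δ, iteratedDeriv j (K t) 0 = 0) ∧
    (∀ t : ℝ, 0 < t →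
      K t t = (1 - Real.exp (-ω' * t)) ^ δ ∧ 0 < (1 - Real.exp (-ω' * t)) ^ δ) := by
  subst hK
  refine ⟨fun t j hj => iteratedDeriv_mul_pow_eq_zero (by fun_prop) (by fun_prop) (by simp) hj,
    fun t ht => ⟨by simp, pow_pos ?_ δ⟩⟩
  have : Real.exp (-ω' * t) < 1 := Real.exp_lt_one_iff.mpr (by nlinarith)
  linarith

/-- The kernel `K(t,τ) = exp(−ω(t−τ))·(1 − exp(−ω̄τ))^δ` is a `δ`-th order
bivariate feedthrough non-asymptotic kernel: all derivatives with respect to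
the second argument up to order `δ − 1` vanish at `τ = 0`, and the diagonal
value `K(t,t) = (1 − exp(−ω̄t))^δ` is strictly positive for `t > 0`. -/
theorem BFNK_kernel_properties
    (ω ω' : ℝ) (hω : 0 < ω) (hω' : 0 < ω') (δ : ℕ) (hδ : 1 ≤ δ)
    (K : ℝ → ℝ → ℝ)
    (hK : K = fun t τ => Real.exp (-ω * (t - τ)) * (1 - Real.exp (-ω' * τ)) ^ δ) :
    (∀ t : ℝ, ∀ j < δ, iteratedDeriv j (K t) 0 = 0) ∧
    (∀ t : ℝ, 0 < t →
      K t t = (1 - Real.exp (-ω' * t)) ^ δ ∧ 0 < (1 - Real.exp (-ω' * t)) ^ δ) :=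
  BFNK_kernel_properties_general ω ω' hω' δ K hK
end

section
/- Let ω > 0, ω̄ > 0 and δ ∈ ℕ, define K(t,τ) = exp(−ω(t−τ))·(1 − exp(−ω̄ τ))^δ, let j ∈ ℕ, and let w : ℝ → ℝ be continuous. Define ξ : ℝ → ℝ by ξ(t) = ∫₀ᵗ K^(j)(t,τ)·w(τ) dτ, where K^(j) is the j-th derivative of K with respect to its second argument. Then ξ(0) = 0 and, for every t ≥ 0, ξ is differentiable at t with ξ'(t) = −ω·ξ(t) + K^(j)(t,t)·w(t); that is, the Volterra image of w induced by K^(j) is realized as the output of a BIBO-stable linear time-varying scalar system. -/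
/-!
The kernel `exp(-ω(t - τ)) G(τ)` separates as `exp(-ωt) · exp(ωτ) G(τ)`, and the `t`-factor passes
through the `τ`-derivatives, so `ξ(t) = exp(-ωt) ∫₀ᵗ (exp(ω·) G)^(j)(τ) w(τ) dτ`. The product rule
and the fundamental theorem of calculus then give `ξ' = -ω ξ + K^(j)(t, t) w(t)`.
-/

open Real

lemma iteratedDeriv_exp_neg_mul_sub_mul (ω t τ : ℝ) (G : ℝ → ℝ) (j : ℕ) :
    iteratedDeriv j (fun σ => exp (-ω * (t - σ)) * G σ) τ =
      exp (-ω * t) * iteratedDeriv j (fun σ => exp (ω * σ) * G σ) τ := by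
  have hsep : (fun σ => exp (-ω * (t - σ)) * G σ) =
      fun σ => exp (-ω * t) * (exp (ω * σ) * G σ) := by
    funext σ
    rw [show -ω * (t - σ) = -ω * t + ω * σ by ring, exp_add, mul_assoc]
  rw [hsep, iteratedDeriv_const_mul_field]

lemma hasDerivAt_exp_neg_mul_mul_integral (ω t : ℝ) {g : ℝ → ℝ} (hg : Continuous g) :
    HasDerivAt (fun s => exp (-ω * s) * ∫ τ in (0 : ℝ)..s, g τ)
      (-ω * (exp (-ω * t) * ∫ τ in (0 : ℝ)..t, g τ) + exp (-ω * t) * g t) t := by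
  have hexp : HasDerivAt (fun s => exp (-ω * s)) (exp (-ω * t) * -ω) t :=
    ((hasDerivAt_id t).const_mul (-ω)).exp.congr_deriv (by simp)
  have hint : HasDerivAt (fun s => ∫ τ in (0 : ℝ)..s, g τ) (g t) t :=
    hg.integral_hasStrictDerivAt 0 t |>.hasDerivAt
  exact (hexp.mul hint).congr_deriv (by ring)

noncomputable def volterraImage (k : ℝ → ℝ → ℝ) (w : ℝ → ℝ) (t : ℝ) : ℝ :=
  ∫ τ in (0 : ℝ)..t, k t τ * w τ

theorem hasDerivAt_volterraImage_iteratedDeriv_exp_neg_mul_sub_mul (ω : ℝ) {G w : ℝ → ℝ} {j : ℕ}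
    (hG : ContDiff ℝ j G) (hw : Continuous w) (t : ℝ) :
    let k := fun s => iteratedDeriv j fun σ => exp (-ω * (s - σ)) * G σ
    HasDerivAt (volterraImage k w) (-ω * volterraImage k w t + k t t * w t) t := by
  have hF : ContDiff ℝ j fun σ => exp (ω * σ) * G σ :=
    ((contDiff_const.mul contDiff_id).exp).mul hG
  have hseparated : volterraImage (fun s => iteratedDeriv j fun σ => exp (-ω * (s - σ)) * G σ) w =
      fun s => exp (-ω * s) *
        ∫ τ in (0 : ℝ)..s, iteratedDeriv j (fun σ => exp (ω * σ) * G σ) τ * w τ := by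
    funext s
    simp only [volterraImage, iteratedDeriv_exp_neg_mul_sub_mul, mul_assoc,
      intervalIntegral.integral_const_mul]
  simp only [hseparated, iteratedDeriv_exp_neg_mul_sub_mul]
  exact (hasDerivAt_exp_neg_mul_mul_integral ω t
    ((hF.continuous_iteratedDeriv j le_rfl).fun_mul hw)).congr_deriv (by ring)

theorem volterra_image_LTV_realization_general
    (ω ω' : ℝ) (δ : ℕ)
    (K : ℝ → ℝ → ℝ)
    (hK : K = fun t τ => Real.exp (-ω * (t - τ)) * (1 - Real.exp (-ω' * τ)) ^ δ)
    (j : ℕ) (w : ℝ → ℝ) (hw : Continuous w)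
    (ξ : ℝ → ℝ)
    (hξ : ξ = fun t => ∫ τ in (0:ℝ)..t, iteratedDeriv j (K t) τ * w τ) :
    ξ 0 = 0 ∧
    ∀ t : ℝ, 0 ≤ t →
      HasDerivAt ξ (-ω * ξ t + iteratedDeriv j (K t) t * w t) t := by
  subst hK hξ
  have hG : ContDiff ℝ j fun τ => (1 - exp (-ω' * τ)) ^ δ :=
    (contDiff_const.sub (contDiff_const.mul contDiff_id).exp).pow δ
  exact ⟨by simp, fun t _ => hasDerivAt_volterraImage_iteratedDeriv_exp_neg_mul_sub_mul ω hG hw t⟩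

/-- The Volterra image `ξ(t) = ∫₀ᵗ K^(j)(t,τ)·w(τ) dτ` induced by the `j`-th
derivative (in the second argument) of the kernel
`K(t,τ) = exp(−ω(t−τ))·(1 − exp(−ω̄τ))^δ` is realized as the output of the
BIBO-stable linear time-varying scalar system
`ξ'(t) = −ω·ξ(t) + K^(j)(t,t)·w(t)`, `ξ(0) = 0`. -/
theorem volterra_image_LTV_realization
    (ω ω' : ℝ) (hω : 0 < ω) (hω' : 0 < ω') (δ : ℕ)
    (K : ℝ → ℝ → ℝ)
    (hK : K = fun t τ => Real.exp (-ω * (t - τ)) * (1 - Real.exp (-ω' * τ)) ^ δ)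
    (j : ℕ) (w : ℝ → ℝ) (hw : Continuous w)
    (ξ : ℝ → ℝ)
    (hξ : ξ = fun t => ∫ τ in (0:ℝ)..t, iteratedDeriv j (K t) τ * w τ) :
    ξ 0 = 0 ∧
    ∀ t : ℝ, 0 ≤ t →
      HasDerivAt ξ (-ω * ξ t + iteratedDeriv j (K t) t * w t) t :=
  volterra_image_LTV_realization_general ω ω' δ K hK j w hw ξ hξ
end

section
/- Let n ≥ 1 be an integer, let a₀,…,a_{n−1} ∈ ℝ, let t > 0, and let y : ℝ → ℝ be n times continuously differentiable on [0,t] satisfying the linear differential equation y^(n)(s) = Σ_{p=0}^{n−1} a_p · y^(p)(s) for all s ∈ [0,t]. Let K : ℝ × ℝ → ℝ be such that τ ↦ K(t,τ) is n times continuously differentiable on [0,t] with K^(j)(t,0) = 0 for all j ∈ {0,…,n−1}. For r ∈ {0,…,n−1} define z_r(s) = y^(r)(s) − Σ_{p=0}^{r−1} a_{n−r+p} · y^(p)(s) (the observer canonical form state variables). Then the following identity holds: (−1)^{n−1} ∫₀ᵗ K^(n)(t,τ) y(τ) dτ + Σ_{p=0}^{n−1} a_p (−1)^p ∫₀ᵗ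 K^(p)(t,τ) y(τ) dτ = Σ_{r=0}^{n−1} (−1)^{n−r−1} K^(n−r−1)(t,t) · z_r(t). -/
/-!
Integrating by parts `p` times moves all derivatives from the kernel onto `y`; since the
`K^(j)(t,0)` vanish, only boundary terms at `τ = t` survive:
`∫ K y^(p) - (-1)^p ∫ K^(p) y = Σ_{i<p} (-1)^(p-i-1) K^(p-i-1)(t,t) y^(i)(t)`.
By the differential equation the integrals `∫ K y^(p)` cancel in the combination on the left,
and regrouping the remaining boundary terms by the power of `K` they contain (the substitution
`p ↦ n - p + i` on `{i < p < n}`) produces the observer canonical state variables.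
-/

open Finset Set intervalIntegral

section PartsOnIcc

variable {a b : ℝ}

theorem integral_mul_derivWithin_eq_derivWithin_mul_Icc (hab : a < b) {u v : ℝ → ℝ}
    (hu : ContDiffOn ℝ 1 u (Icc a b)) (hv : ContDiffOn ℝ 1 v (Icc a b)) :
    ∫ x in a..b, u x * derivWithin v (Icc a b) x
      = u b * v b - u a * v a - ∫ x in a..b, derivWithin u (Icc a b) x * v x := by
  have hs : UniqueDiffOn ℝ (Icc a b) := uniqueDiffOn_Icc hab
  have hI : uIcc a b = Icc a b := uIcc_of_le hab.le
  have hasDeriv {w : ℝ → ℝ} (hw : ContDiffOn ℝ 1 w (Icc a b)) :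
      ∀ x ∈ uIcc a b, HasDerivWithinAt w (derivWithin w (Icc a b) x) (uIcc a b) x := by
    rw [hI]
    exact fun x hx ↦ (hw.differentiableOn one_ne_zero x hx).hasDerivWithinAt
  have integrable {w : ℝ → ℝ} (hw : ContDiffOn ℝ 1 w (Icc a b)) :
      IntervalIntegrable (derivWithin w (Icc a b)) MeasureTheory.volume a b :=
    (hw.continuousOn_derivWithin hs le_rfl).intervalIntegrable_of_Icc hab.le
  exact integral_mul_deriv_eq_deriv_mul_of_hasDerivWithinAt (hasDeriv hu) (hasDeriv hv)
    (integrable hu) (integrable hv)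

theorem integral_mul_iteratedDerivWithin_sub_eq_sum (hab : a < b) {m : ℕ} {g f : ℝ → ℝ}
    (hg : ContDiffOn ℝ m g (Icc a b)) (hf : ContDiffOn ℝ m f (Icc a b))
    (hg_zero : ∀ j < m, iteratedDerivWithin j g (Icc a b) a = 0) :
    (∫ x in a..b, g x * iteratedDerivWithin m f (Icc a b) x)
        - (-1) ^ m * ∫ x in a..b, iteratedDerivWithin m g (Icc a b) x * f x
      = ∑ i ∈ range m, (-1) ^ (m - i - 1) * iteratedDerivWithin (m - i - 1) g (Icc a b) b
          * iteratedDerivWithin i f (Icc a b) b := by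
  have hs : UniqueDiffOn ℝ (Icc a b) := uniqueDiffOn_Icc hab
  induction m generalizing f with
  | zero =>
    simp only [iteratedDerivWithin_zero, pow_zero, one_mul, range_zero, sum_empty]
    exact sub_self _
  | succ m ih =>
    have hgm := (contDiffOn_nat_succ_iff_contDiffOn_one_iteratedDerivWithin hs).1 hg
    have hf' : ContDiffOn ℝ m (derivWithin f (Icc a b)) (Icc a b) :=
      hf.derivWithin hs (by norm_cast)
    have hparts := integral_mul_derivWithin_eq_derivWithin_mul_Icc hab hgm.2 (hf.of_le (by norm_cast; omega))
    rw [← iteratedDerivWithin_succ, hg_zero m m.lt_succ_self, zero_mul, sub_zero] at hparts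
    have ih' := ih hgm.1 hf' (fun j hj ↦ hg_zero j (by omega))
    simp only [← iteratedDerivWithin_succ', hparts] at ih'
    rw [sum_range_succ']
    simp only [Nat.add_sub_add_right, Nat.sub_zero, Nat.add_sub_cancel, iteratedDerivWithin_zero]
    rw [← ih']
    ring

end PartsOnIcc

theorem sum_range_sum_range_eq_sum_range_sum_range_sub {M : Type*} [AddCommMonoid M]
    (n : ℕ) (f : ℕ → ℕ → M) :
    ∑ p ∈ range n, ∑ i ∈ range p, f p i = ∑ r ∈ range n, ∑ i ∈ range r, f (n - r + i) i := by
  rw [sum_sigma', sum_sigma']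
  refine sum_nbij' (fun x ↦ ⟨n - x.1 + x.2, x.2⟩) (fun x ↦ ⟨n - x.1 + x.2, x.2⟩) ?_ ?_ ?_ ?_ ?_ <;>
    rintro ⟨p, i⟩ h <;> simp only [mem_sigma, Finset.mem_range] at h ⊢ <;>
    first | omega | rw [show n - (n - p + i) + i = p by omega]

/-- The identity in abstract form: `I p = ∫ K^(p) y`, `J p = ∫ K y^(p)`, `c j = (-1)^j K^(j)(t,t)`
and `Y i = y^(i)(t)`. -/
theorem observer_form_identity_of_parts {n : ℕ} (hn : 1 ≤ n) (a I J c Y : ℕ → ℝ)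
    (hparts : ∀ p ≤ n, J p - (-1) ^ p * I p = ∑ i ∈ range p, c (p - i - 1) * Y i)
    (hode : J n = ∑ p ∈ range n, a p * J p) :
    (-1) ^ (n - 1) * I n + ∑ p ∈ range n, a p * (-1) ^ p * I p
      = ∑ r ∈ range n, c (n - r - 1) * (Y r - ∑ i ∈ range r, a (n - r + i) * Y i) := by
  have hsign : (-1 : ℝ) ^ (n - 1) = -(-1) ^ n := by
    obtain ⟨m, rfl⟩ := Nat.exists_eq_add_of_le' hn
    simp [pow_succ]
  have hlower : ∑ p ∈ range n, a p * (-1) ^ p * I p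
      = ∑ p ∈ range n, a p * J p - ∑ p ∈ range n, ∑ i ∈ range p, a p * (c (p - i - 1) * Y i) := by
    rw [← sum_sub_distrib]
    refine sum_congr rfl fun p hp ↦ ?_
    rw [← mul_sum, ← hparts p (Finset.mem_range.1 hp).le]
    ring
  rw [hsign, hlower, ← hode, sum_range_sum_range_eq_sum_range_sum_range_sub]
  simp only [Nat.add_sub_cancel, mul_sub, mul_sum, sum_sub_distrib, mul_left_comm (c _) (a _),
    ← hparts n le_rfl]
  ring

/-- For an output `y` of an `n`-th order autonomous linear system in observer
canonical form (input–output realization `y^(n) = Σ_{p<n} a_p y^(p)`) and a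
BF-NK kernel `K` (i.e. `K^(j)(t,0) = 0` for `j < n`), the combination of
Volterra images of `y` equals a linear combination of the observer canonical
state variables `z_r(t) = y^(r)(t) − Σ_{p<r} a_{n−r+p} y^(p)(t)` weighted by
the diagonal kernel derivatives. -/
theorem volterra_identity_observer_canonical_form
    (n : ℕ) (hn : 1 ≤ n) (a : ℕ → ℝ) (t : ℝ) (ht : 0 < t)
    (y : ℝ → ℝ) (K : ℝ → ℝ → ℝ)
    (hy : ContDiffOn ℝ n y (Set.Icc 0 t))
    (hode : ∀ s ∈ Set.Icc (0:ℝ) t,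
      iteratedDerivWithin n y (Set.Icc 0 t) s
        = ∑ p ∈ Finset.range n, a p * iteratedDerivWithin p y (Set.Icc 0 t) s)
    (hK : ContDiffOn ℝ n (K t) (Set.Icc 0 t))
    (hBFNK : ∀ j < n, iteratedDerivWithin j (K t) (Set.Icc 0 t) 0 = 0) :
    (-1 : ℝ) ^ (n - 1)
        * (∫ τ in (0:ℝ)..t, iteratedDerivWithin n (K t) (Set.Icc 0 t) τ * y τ)
      + ∑ p ∈ Finset.range n, a p * (-1 : ℝ) ^ p
          * ∫ τ in (0:ℝ)..t, iteratedDerivWithin p (K t) (Set.Icc 0 t) τ * y τ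
      = ∑ r ∈ Finset.range n,
          (-1 : ℝ) ^ (n - r - 1) * iteratedDerivWithin (n - r - 1) (K t) (Set.Icc 0 t) t
            * (iteratedDerivWithin r y (Set.Icc 0 t) t
                - ∑ p ∈ Finset.range r, a (n - r + p) * iteratedDerivWithin p y (Set.Icc 0 t) t) := by
  have hparts (p : ℕ) (hp : p ≤ n) := integral_mul_iteratedDerivWithin_sub_eq_sum ht
    (hK.of_le (by exact_mod_cast hp)) (hy.of_le (by exact_mod_cast hp))
    fun j hj ↦ hBFNK j (hj.trans_le hp)
  have hode_integral : ∫ τ in (0:ℝ)..t, K t τ * iteratedDerivWithin n y (Icc 0 t) τ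
      = ∑ p ∈ range n, a p * ∫ τ in (0:ℝ)..t, K t τ * iteratedDerivWithin p y (Icc 0 t) τ := by
    simp only [← integral_const_mul]
    rw [← integral_finsetSum]
    · refine integral_congr fun τ hτ ↦ ?_
      rw [uIcc_of_le ht.le] at hτ
      simp only [hode τ hτ, mul_sum, mul_left_comm (K t τ)]
    · intro p hp
      have hyp := hy.continuousOn_iteratedDerivWithin
        (by exact_mod_cast (Finset.mem_range.1 hp).le) (uniqueDiffOn_Icc ht)
      exact (continuousOn_const.mul (hK.continuousOn.mul hyp)).intervalIntegrable_of_Icc ht.le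
  exact observer_form_identity_of_parts hn a
    (fun p ↦ ∫ τ in (0:ℝ)..t, iteratedDerivWithin p (K t) (Icc 0 t) τ * y τ)
    (fun p ↦ ∫ τ in (0:ℝ)..t, K t τ * iteratedDerivWithin p y (Icc 0 t) τ)
    (fun j ↦ (-1) ^ j * iteratedDerivWithin j (K t) (Icc 0 t) t)
    (fun i ↦ iteratedDerivWithin i y (Icc 0 t) t) hparts hode_integral
end

section
/- Let A be an n×n real matrix and let (C_i)_{i∈S} be a finite family of real matrices with C_i of size m_i × n. Suppose that for each i ∈ S there exist an integer n_i, a matrix T_io ∈ ℝ^{n_i×n} of full row rank n_i, a matrix A_io ∈ ℝ^{n_i×n_i}, and a matrix C_io ∈ ℝ^{m_i×n_i} such that T_io·A = A_io·T_io, C_i = C_io·T_io, and the pair (A_io, C_io) is observable, i.e. the stacked matrix col(C_io, C_io·A_io, …, C_io·A_io^{n_i−1}) has rank n_i. Then the rank of the observability matrix of the pair (A, col_{i∈S}(C_i)), i.e. of the stacked matrix whose blocks are C_i·A^k for all i ∈ S and k ∈ {0,…,n−1}, equals the rank of the stacked matrix col_{i∈S}(T_io). -/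
/-!
Both ranks are dimensions of row spaces, and the two row spaces coincide. Since
`C i * A ^ k = (Cio i * Aio i ^ k) * Tio i`, every row of the observability matrix lies in the
row space of `col (Tio i)`. Conversely, observability of `(Aio i, Cio i)` says that the rows of
`Cio i * Aio i ^ k`, `k < ni i`, span the whole space, so every row of `Tio i` is a combination of
rows of `C i * A ^ k` with `k < ni i ≤ n`; the bound `ni i ≤ n` comes from the rank of `Tio i`.
-/

open Matrix Submodule Set

namespace Matrix

variable {l m n K R : Type*}

theorem mul_pow_eq_pow_mul_of_mul_eq [Fintype m] [Fintype n] [DecidableEq m] [DecidableEq n]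
    [Semiring R] {T : Matrix m n R} {A : Matrix n n R} {B : Matrix m m R} (h : T * A = B * T)
    (k : ℕ) : T * A ^ k = B ^ k * T := by
  induction k with
  | zero => simp
  | succ k ih =>
    rw [pow_succ, ← Matrix.mul_assoc, ih, Matrix.mul_assoc, h, ← Matrix.mul_assoc, ← pow_succ]

theorem span_row_mul_le [Fintype m] [CommSemiring R] (X : Matrix l m R) (N : Matrix m n R) :
    span R (range (X * N).row) ≤ span R (range N.row) := by
  rw [span_le, ← range_vecMulLinear]
  rintro _ ⟨r, rfl⟩
  exact ⟨X r, rfl⟩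

theorem span_row_mul_eq_of_span_row_eq_top [Fintype l] [Fintype m] [DecidableEq m]
    [CommSemiring R] {O : Matrix l m R} (hO : span R (range O.row) = ⊤) (N : Matrix m n R) :
    span R (range (O * N).row) = span R (range N.row) := by
  refine le_antisymm (span_row_mul_le O N) ?_
  rw [span_le]
  rintro _ ⟨t, rfl⟩
  obtain ⟨w, hw⟩ : Pi.single t 1 ∈ LinearMap.range O.vecMulLinear := by
    rw [range_vecMulLinear, hO]; trivial
  rw [← range_vecMulLinear]
  refine ⟨w, ?_⟩
  simp only [vecMulLinear_apply] at hw ⊢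
  rw [← vecMul_vecMul, hw, single_one_vecMul]

theorem span_row_eq_top_of_rank_eq_card [Field K] [Finite m] [Fintype n] {O : Matrix m n K}
    (h : O.rank = Fintype.card n) : span K (range O.row) = ⊤ :=
  eq_top_of_finrank_eq (by rw [← rank_eq_finrank_span_row, h, Module.finrank_fintype_fun_eq_card])

section Observability

variable [Fintype n] [DecidableEq n]

def obsvMat [Semiring R] (N : ℕ) (A : Matrix n n R) (C : Matrix m n R) :
    Matrix (Fin N × m) n R :=
  of fun p => (C * A ^ (p.1 : ℕ)) p.2

theorem obsvMat_mul_eq_of_mul_eq [Fintype l] [DecidableEq l] [Semiring R] {T : Matrix l n R}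
    {A : Matrix n n R} {B : Matrix l l R} (h : T * A = B * T) (D : Matrix m l R) (N : ℕ) :
    obsvMat N A (D * T) = obsvMat N B D * T := by
  ext ⟨k, j⟩ c
  change (D * T * A ^ (k : ℕ)) j c = ∑ x, (D * B ^ (k : ℕ)) j x * T x c
  rw [Matrix.mul_assoc, mul_pow_eq_pow_mul_of_mul_eq h, ← Matrix.mul_assoc, mul_apply]

theorem span_row_obsvMat_mono [CommSemiring R] (A : Matrix n n R) (C : Matrix m n R) {r N : ℕ}
    (h : r ≤ N) : span R (range (obsvMat r A C).row) ≤ span R (range (obsvMat N A C).row) :=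
  span_mono (range_subset_iff.2 fun p => ⟨(Fin.castLE h p.1, p.2), rfl⟩)

theorem span_row_obsvMat_eq_of_rank_eq [Fintype m] [Field K] {r N : ℕ} {T : Matrix (Fin r) n K}
    {A : Matrix n n K} {B : Matrix (Fin r) (Fin r) K} (h : T * A = B * T) {D : Matrix m (Fin r) K}
    (hobs : (obsvMat r B D).rank = r) (hN : r ≤ N) :
    span K (range (obsvMat N A (D * T)).row) = span K (range T.row) := by
  have hspan := span_row_mul_eq_of_span_row_eq_top
    (span_row_eq_top_of_rank_eq_card (by rwa [Fintype.card_fin])) T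
  refine le_antisymm ?_ ?_
  · rw [obsvMat_mul_eq_of_mul_eq h]
    exact span_row_mul_le _ _
  · rw [← hspan, ← obsvMat_mul_eq_of_mul_eq h]
    exact span_row_obsvMat_mono A _ hN

end Observability

end Matrix

theorem rank_obsv_eq_rank_col_Tio_general
    {S : Type*} [Fintype S] (n : ℕ)
    (A : Matrix (Fin n) (Fin n) ℝ)
    (m : S → ℕ) (C : ∀ i : S, Matrix (Fin (m i)) (Fin n) ℝ)
    (ni : S → ℕ)
    (Tio : ∀ i : S, Matrix (Fin (ni i)) (Fin n) ℝ)
    (Aio : ∀ i : S, Matrix (Fin (ni i)) (Fin (ni i)) ℝ)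
    (Cio : ∀ i : S, Matrix (Fin (m i)) (Fin (ni i)) ℝ)
    (hTiorank : ∀ i : S, (Tio i).rank = ni i)
    (hcomm : ∀ i : S, Tio i * A = Aio i * Tio i)
    (hC : ∀ i : S, C i = Cio i * Tio i)
    (hobs : ∀ i : S,
      (Matrix.of fun (p : Fin (ni i) × Fin (m i)) (c : Fin (ni i)) =>
          (Cio i * (Aio i) ^ (p.1 : ℕ)) p.2 c).rank = ni i) :
    (Matrix.of fun (p : (Σ i : S, Fin (m i)) × Fin n) (c : Fin n) =>
        (C p.1.1 * A ^ ((p.2 : ℕ))) p.1.2 c).rank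
      = (Matrix.of fun (p : Σ i : S, Fin (ni i)) (c : Fin n) =>
          Tio p.1 p.2 c).rank := by
  have hni (i : S) : ni i ≤ n := hTiorank i ▸ (Tio i).rank_le_width
  have hblock (i : S) : span ℝ (range (obsvMat n A (C i)).row) = span ℝ (range (Tio i).row) :=
    hC i ▸ span_row_obsvMat_eq_of_rank_eq (hcomm i) (hobs i) (hni i)
  have hrows_obsv : range (Matrix.of fun (p : (Σ i : S, Fin (m i)) × Fin n) (c : Fin n) =>
      (C p.1.1 * A ^ ((p.2 : ℕ))) p.1.2 c).row = ⋃ i, range (obsvMat n A (C i)).row := by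
    ext v
    simp only [mem_range, mem_iUnion, Sigma.exists, Prod.exists]
    exact ⟨fun ⟨i, j, k, h⟩ => ⟨i, k, j, h⟩, fun ⟨i, k, j, h⟩ => ⟨i, j, k, h⟩⟩
  have hrows_col : range (Matrix.of fun (p : Σ i : S, Fin (ni i)) (c : Fin n) =>
      Tio p.1 p.2 c).row = ⋃ i, range (Tio i).row :=
    range_sigma_eq_iUnion_range _
  rw [rank_eq_finrank_span_row, rank_eq_finrank_span_row, hrows_obsv, hrows_col, span_iUnion,
    span_iUnion, iSup_congr hblock]

/-- If each pair `(A, C i)` admits an observability decomposition with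
observable part `(Aio i, Cio i)` via the full-row-rank transformation
`Tio i` (so `Tio i * A = Aio i * Tio i` and `C i = Cio i * Tio i`), then the
rank of the observability matrix of the pair `(A, col_{i∈S} (C i))` equals
the rank of the stacked matrix `col_{i∈S} (Tio i)`. -/
theorem rank_obsv_eq_rank_col_Tio
    {S : Type*} [Fintype S] [DecidableEq S] (n : ℕ)
    (A : Matrix (Fin n) (Fin n) ℝ)
    (m : S → ℕ) (C : ∀ i : S, Matrix (Fin (m i)) (Fin n) ℝ)
    (ni : S → ℕ)
    (Tio : ∀ i : S, Matrix (Fin (ni i)) (Fin n) ℝ)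
    (Aio : ∀ i : S, Matrix (Fin (ni i)) (Fin (ni i)) ℝ)
    (Cio : ∀ i : S, Matrix (Fin (m i)) (Fin (ni i)) ℝ)
    (hTiorank : ∀ i : S, (Tio i).rank = ni i)
    (hcomm : ∀ i : S, Tio i * A = Aio i * Tio i)
    (hC : ∀ i : S, C i = Cio i * Tio i)
    (hobs : ∀ i : S,
      (Matrix.of fun (p : Fin (ni i) × Fin (m i)) (c : Fin (ni i)) =>
          (Cio i * (Aio i) ^ (p.1 : ℕ)) p.2 c).rank = ni i) :
    (Matrix.of fun (p : (Σ i : S, Fin (m i)) × Fin n) (c : Fin n) =>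
        (C p.1.1 * A ^ ((p.2 : ℕ))) p.1.2 c).rank
      = (Matrix.of fun (p : Σ i : S, Fin (ni i)) (c : Fin n) =>
          Tio p.1 p.2 c).rank :=
  rank_obsv_eq_rank_col_Tio_general n A m C ni Tio Aio Cio hTiorank hcomm hC hobs
end

section
/- (Robustness of the delayed distributed observer.) Let A be an n×n real matrix, let d : ℝ → ℝⁿ be continuous, and let x : ℝ → ℝⁿ be differentiable with x'(s) = A·x(s) + d(s) for every s ∈ ℝ. Let τ̄ ≥ 0, t_δ ≥ 0, let M be an invertible n×n real matrix, and suppose the stacked local estimates ẑ : ℝ → ℝⁿ satisfy ẑ(s) = M·x(s) + e(s) for every s ≥ t_δ, where e : ℝ → ℝⁿ is the local estimation error. Define x̂(t) = exp(τ̄·A)·M⁻¹·ẑ(t−τ̄). Then for every t ≥ τ̄ + t_δ: (i) x̂(t) − x(t) = exp(τ̄·A)·M⁻¹·e(t−τ̄) − ∫_{t−τ̄}^{t} exp((t−s)·A)·d(s) ds; and (ii) if in addition ‖e(s)‖ ≤ ε̄ for all s ≥ t_δ and ‖d(s)‖ ≤ d̄ for all s, then ‖x̂(t) − x(t)‖ ≤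 ‖exp(τ̄·A)·M⁻¹‖_op · ε̄ + τ̄ · d̄ · sup_{u∈[0,τ̄]} ‖exp(u·A)‖_op. In particular the distributed state estimate remains bounded for bounded process disturbance and bounded local estimation error. -/
/-!
Variation of constants: for `x' = A x + d`, the derivative of `s ↦ exp ((t - s) A) x(s)` is
`exp ((t - s) A) d(s)`, so integrating over `[t - τ̄, t]` gives
`x(t) = exp (τ̄ A) x(t - τ̄) + ∫_{t-τ̄}^t exp ((t - s) A) d(s) ds`.
Since `M⁻¹ ẑ(t - τ̄) = x(t - τ̄) + M⁻¹ e(t - τ̄)` once `t - τ̄ ≥ t_δ`, the prediction error is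
exactly (i); (ii) follows from the triangle inequality and the operator-norm bound on the
integrand over an interval of length `τ̄`.
-/

open NormedSpace

theorem Matrix.toEuclideanCLM_exp {𝕜 ι : Type*} [RCLike 𝕜] [Fintype ι] [DecidableEq ι]
    (A : Matrix ι ι 𝕜) :
    Matrix.toEuclideanCLM (𝕜 := 𝕜) (exp A) = exp (Matrix.toEuclideanCLM (𝕜 := 𝕜) A) := by
  open scoped Matrix.Norms.L2Operator in
  exact map_exp_of_mem_ball (𝕂 := 𝕜) _
    (AddMonoidHomClass.continuous_of_bound _ 1 fun B => by rw [one_mul, Matrix.cstar_norm_def]) A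
    ((expSeries_radius_eq_top 𝕜 (Matrix ι ι 𝕜)).symm ▸ edist_lt_top _ _)

theorem IsCompact.le_ciSup₂_of_continuousOn {α : Type*} [TopologicalSpace α] {s : Set α}
    (hs : IsCompact s) {f : α → ℝ} (hf : ContinuousOn f s) {a : α} (ha : a ∈ s) :
    f a ≤ ⨆ b ∈ s, f b := by
  obtain ⟨C, hC⟩ := hs.bddAbove_image hf
  refine le_ciSup₂ (f := fun b (_ : b ∈ s) => f b) ⟨C, ?_⟩ a ha
  rintro _ ⟨_, ⟨b, rfl⟩, ⟨hb, rfl⟩⟩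
  exact hC ⟨b, hb, rfl⟩

namespace ContinuousLinearMap

variable {E : Type*} [NormedAddCommGroup E] [NormedSpace ℝ E] [CompleteSpace E]
  (B : E →L[ℝ] E)

theorem continuous_exp_smul : Continuous fun u : ℝ => exp (u • B) :=
  continuous_iff_continuousAt.2 fun u => (hasDerivAt_exp_smul_const B u).continuousAt

theorem hasDerivAt_exp_sub_smul_apply {x d : ℝ → E} {t s : ℝ}
    (hx : HasDerivAt x (B (x s) + d s) s) :
    HasDerivAt (fun s => exp ((t - s) • B) (x s)) (exp ((t - s) • B) (d s)) s := by
  have hflow : HasDerivAt (fun s : ℝ => exp ((t - s) • B))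
      ((-1 : ℝ) • (exp ((t - s) • B) * B)) s :=
    (hasDerivAt_exp_smul_const B (t - s)).scomp s ((hasDerivAt_id' s).const_sub t)
  refine (hflow.clm_apply hx).congr_deriv ?_
  simp only [neg_smul, one_smul, neg_apply, mul_apply_eq_comp, map_add]
  abel

theorem integral_exp_sub_smul_apply {x d : ℝ → E} (hx : ∀ s, HasDerivAt x (B (x s) + d s) s)
    (hd : Continuous d) (a b : ℝ) :
    ∫ s in a..b, exp ((b - s) • B) (d s) = x b - exp ((b - a) • B) (x a) := by
  have hcont : Continuous fun s => exp ((b - s) • B) (d s) :=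
    ((continuous_exp_smul B).comp (continuous_const.sub continuous_id)).clm_apply hd
  rw [intervalIntegral.integral_eq_sub_of_hasDerivAt
    (fun s _ => hasDerivAt_exp_sub_smul_apply B (hx s)) (hcont.intervalIntegrable a b)]
  simp

theorem exp_smul_apply_add_sub_eq {x d : ℝ → E} (hx : ∀ s, HasDerivAt x (B (x s) + d s) s)
    (hd : Continuous d) (τ t : ℝ) (y : E) :
    exp (τ • B) (x (t - τ) + y) - x t
      = exp (τ • B) y - ∫ s in (t - τ)..t, exp ((t - s) • B) (d s) := by
  rw [integral_exp_sub_smul_apply B hx hd, sub_sub_cancel, map_add]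
  abel

theorem norm_integral_exp_sub_smul_apply_le {d : ℝ → E} {τ D : ℝ} (hτ : 0 ≤ τ)
    (hD : ∀ s, ‖d s‖ ≤ D) (t : ℝ) :
    ‖∫ s in (t - τ)..t, exp ((t - s) • B) (d s)‖
      ≤ τ * D * ⨆ u ∈ Set.Icc (0 : ℝ) τ, ‖exp (u • B)‖ := by
  set S := ⨆ u ∈ Set.Icc (0 : ℝ) τ, ‖exp (u • B)‖
  have hS : ∀ u ∈ Set.Icc (0 : ℝ) τ, ‖exp (u • B)‖ ≤ S := fun u hu =>
    isCompact_Icc.le_ciSup₂_of_continuousOn (continuous_exp_smul B).norm.continuousOn hu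
  have hS₀ : 0 ≤ S := (norm_nonneg _).trans (hS 0 ⟨le_rfl, hτ⟩)
  have hbound : ∀ s ∈ Set.uIoc (t - τ) t, ‖exp ((t - s) • B) (d s)‖ ≤ S * D := by
    intro s hs
    rw [Set.uIoc_of_le (by linarith)] at hs
    exact (exp ((t - s) • B)).le_opNorm_of_le (hD s) |>.trans <|
      mul_le_mul_of_nonneg_right (hS _ ⟨by linarith [hs.2], by linarith [hs.1]⟩)
        ((norm_nonneg _).trans (hD s))
  calc ‖∫ s in (t - τ)..t, exp ((t - s) • B) (d s)‖ ≤ S * D * |t - (t - τ)| :=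
        intervalIntegral.norm_integral_le_of_norm_le_const hbound
    _ = τ * D * S := by rw [sub_sub_cancel, abs_of_nonneg hτ]; ring

end ContinuousLinearMap

theorem distributed_observer_robustness_general
    (n : ℕ) (A : Matrix (Fin n) (Fin n) ℝ)
    (d : ℝ → EuclideanSpace ℝ (Fin n)) (hd : Continuous d)
    (x : ℝ → EuclideanSpace ℝ (Fin n))
    (hx : ∀ s : ℝ, HasDerivAt x ((Matrix.toEuclideanCLM (𝕜 := ℝ) A) (x s) + d s) s)
    (τbar tδ : ℝ) (hτ : 0 ≤ τbar)
    (M : Matrix (Fin n) (Fin n) ℝ) (hM : IsUnit M)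
    (zhat e : ℝ → EuclideanSpace ℝ (Fin n))
    (hzhat : ∀ s : ℝ, tδ ≤ s → zhat s = (Matrix.toEuclideanCLM (𝕜 := ℝ) M) (x s) + e s)
    (xhat : ℝ → EuclideanSpace ℝ (Fin n))
    (hxhat : xhat = fun t =>
      (Matrix.toEuclideanCLM (𝕜 := ℝ) (exp (τbar • A)))
        ((Matrix.toEuclideanCLM (𝕜 := ℝ) M⁻¹) (zhat (t - τbar)))) :
    ∀ t : ℝ, τbar + tδ ≤ t →
      (xhat t - x t
          = (Matrix.toEuclideanCLM (𝕜 := ℝ) (exp (τbar • A) * M⁻¹)) (e (t - τbar))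
            - ∫ s in (t - τbar)..t,
                (Matrix.toEuclideanCLM (𝕜 := ℝ) (exp ((t - s) • A))) (d s)) ∧
      (∀ εbar dbar : ℝ,
        (∀ s : ℝ, tδ ≤ s → ‖e s‖ ≤ εbar) → (∀ s : ℝ, ‖d s‖ ≤ dbar) →
        ‖xhat t - x t‖
          ≤ ‖(Matrix.toEuclideanCLM (𝕜 := ℝ) (exp (τbar • A) * M⁻¹) :
                EuclideanSpace ℝ (Fin n) →L[ℝ] EuclideanSpace ℝ (Fin n))‖ * εbar
            + τbar * dbar * ⨆ u ∈ Set.Icc (0:ℝ) τbar,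
                ‖(Matrix.toEuclideanCLM (𝕜 := ℝ) (exp (u • A)) :
                    EuclideanSpace ℝ (Fin n) →L[ℝ] EuclideanSpace ℝ (Fin n))‖) := by
  intro t ht
  set T := Matrix.toEuclideanCLM (𝕜 := ℝ) (n := Fin n)
  set B := T A
  have hexp (u : ℝ) : T (exp (u • A)) = exp (u • B) := by
    rw [Matrix.toEuclideanCLM_exp, map_smul]
  have hdelay : tδ ≤ t - τbar := by linarith
  have hMinv (v : EuclideanSpace ℝ (Fin n)) : T M⁻¹ (T M v) = v := by
    change (T M⁻¹ * T M) v = v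
    rw [← map_mul,
      Matrix.nonsing_inv_mul M ((Matrix.isUnit_iff_isUnit_det M).mp hM), map_one]
    rfl
  have hprediction : xhat t = exp (τbar • B) (x (t - τbar) + T M⁻¹ (e (t - τbar))) := by
    simp only [hxhat, hzhat _ hdelay, map_add, hMinv, hexp]
  have hdecomp : xhat t - x t = T (exp (τbar • A) * M⁻¹) (e (t - τbar))
      - ∫ s in (t - τbar)..t, T (exp ((t - s) • A)) (d s) := by
    simp only [hexp, map_mul]
    exact hprediction ▸ B.exp_smul_apply_add_sub_eq hx hd τbar t _
  refine ⟨hdecomp, fun εbar dbar he hdb => ?_⟩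
  rw [hdecomp]
  simp only [hexp]
  calc _ ≤ ‖T (exp (τbar • A) * M⁻¹) (e (t - τbar))‖
        + ‖∫ s in (t - τbar)..t, exp ((t - s) • B) (d s)‖ := norm_sub_le _ _
    _ ≤ _ := add_le_add ((T _).le_opNorm_of_le (he _ hdelay))
        (B.norm_integral_exp_sub_smul_apply_le hτ hdb t)

/-- Robustness of the delayed distributed observer: with plant
`ẋ = A x + d`, noisy stacked local estimates `ẑ(s) = M·x(s) + e(s)` for
`s ≥ t_δ` (`M` invertible), and the delay-compensated estimate
`x̂(t) = exp(τ̄·A)·M⁻¹·ẑ(t−τ̄)`, for every `t ≥ τ̄ + t_δ` the estimation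
error decomposes as
`x̂(t) − x(t) = exp(τ̄·A)·M⁻¹·e(t−τ̄) − ∫_{t−τ̄}^t exp((t−s)A)·d(s) ds`,
and if `‖e‖ ≤ ε̄` (for `s ≥ t_δ`) and `‖d‖ ≤ d̄`, it is bounded by
`‖exp(τ̄A)M⁻¹‖_op·ε̄ + τ̄·d̄·sup_{u∈[0,τ̄]}‖exp(uA)‖_op`. -/
theorem distributed_observer_robustness
    (n : ℕ) (A : Matrix (Fin n) (Fin n) ℝ)
    (d : ℝ → EuclideanSpace ℝ (Fin n)) (hd : Continuous d)
    (x : ℝ → EuclideanSpace ℝ (Fin n))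
    (hx : ∀ s : ℝ, HasDerivAt x ((Matrix.toEuclideanCLM (𝕜 := ℝ) A) (x s) + d s) s)
    (τbar tδ : ℝ) (hτ : 0 ≤ τbar) (htδ : 0 ≤ tδ)
    (M : Matrix (Fin n) (Fin n) ℝ) (hM : IsUnit M)
    (zhat e : ℝ → EuclideanSpace ℝ (Fin n))
    (hzhat : ∀ s : ℝ, tδ ≤ s → zhat s = (Matrix.toEuclideanCLM (𝕜 := ℝ) M) (x s) + e s)
    (xhat : ℝ → EuclideanSpace ℝ (Fin n))
    (hxhat : xhat = fun t =>
      (Matrix.toEuclideanCLM (𝕜 := ℝ) (exp (τbar • A)))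
        ((Matrix.toEuclideanCLM (𝕜 := ℝ) M⁻¹) (zhat (t - τbar)))) :
    ∀ t : ℝ, τbar + tδ ≤ t →
      (xhat t - x t
          = (Matrix.toEuclideanCLM (𝕜 := ℝ) (exp (τbar • A) * M⁻¹)) (e (t - τbar))
            - ∫ s in (t - τbar)..t,
                (Matrix.toEuclideanCLM (𝕜 := ℝ) (exp ((t - s) • A))) (d s)) ∧
      (∀ εbar dbar : ℝ,
        (∀ s : ℝ, tδ ≤ s → ‖e s‖ ≤ εbar) → (∀ s : ℝ, ‖d s‖ ≤ dbar) →
        ‖xhat t - x t‖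
          ≤ ‖(Matrix.toEuclideanCLM (𝕜 := ℝ) (exp (τbar • A) * M⁻¹) :
                EuclideanSpace ℝ (Fin n) →L[ℝ] EuclideanSpace ℝ (Fin n))‖ * εbar
            + τbar * dbar * ⨆ u ∈ Set.Icc (0:ℝ) τbar,
                ‖(Matrix.toEuclideanCLM (𝕜 := ℝ) (exp (u • A)) :
                    EuclideanSpace ℝ (Fin n) →L[ℝ] EuclideanSpace ℝ (Fin n))‖) :=
  distributed_observer_robustness_general n A d hd x hx τbar tδ hτ M hM zhat e hzhat xhat hxhat
end
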